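/- arXiv:1602.01533 — 2 statements merged into one kernel-verified Lean document; each statement's English description precedes it below -/
import Mathlib

section
/- Let G be a discrete group and let N be a normal subgroup of G (N ⊴ G). If the amenable radical R_a(N) of N is trivial and the amenable radical R_a(G/N) of G/N is trivial, then the amenable radical R_a(G) of G is trivial; that is, the class of groups with trivial amenable radical is closed under extensions. -/
/-- A discrete group is amenable if it admits a left-invariant finitely additive
probability measure on its subsets. -/
def IsAmenableGroup (G : Type*) [Group G] : Prop :=
  ∃ m : Set G → ℝ,
    (∀ s : Set G, 0 ≤ m s) ∧
    m Set.univ = 1 ∧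
    (∀ s t : Set G, Disjoint s t → m (s ∪ t) = m s + m t) ∧
    (∀ (g : G) (s : Set G), m ((g * ·) '' s) = m s)

lemma IsAmenableGroup.of_surjective {H Q : Type*} [Group H] [Group Q]
    (f : H →* Q) (hf : Function.Surjective f) (h : IsAmenableGroup H) :
    IsAmenableGroup Q := by
  obtain ⟨m, hpos, huniv, hadd, hinv⟩ := h
  refine ⟨fun s => m (f ⁻¹' s), fun s => hpos _, by simpa using huniv, ?_, ?_⟩
  · intro s t hst
    show m (f ⁻¹' (s ∪ t)) = m (f ⁻¹' s) + m (f ⁻¹' t)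
    rw [Set.preimage_union]
    exact hadd _ _ (hst.preimage f)
  · intro q s
    obtain ⟨g, rfl⟩ := hf q
    have key : f ⁻¹' ((f g * ·) '' s) = (g * ·) '' (f ⁻¹' s) := by
      ext y
      simp only [Set.mem_preimage, Set.mem_image]
      constructor
      · rintro ⟨x, hx, hxy⟩
        refine ⟨g⁻¹ * y, ?_, by group⟩
        have : f (g⁻¹ * y) = x := by
          rw [map_mul, map_inv, ← hxy]
          group
        show g⁻¹ * y ∈ f ⁻¹' s
        rw [Set.mem_preimage, this]; exact hx
      · rintro ⟨x, hx, rfl⟩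
        exact ⟨f x, hx, by simp [map_mul]⟩
    show m (f ⁻¹' ((f g * ·) '' s)) = m (f ⁻¹' s)
    rw [key, hinv]

/-- The class of groups with trivial amenable radical is closed
under extensions: if `N ⊴ G`, every amenable normal subgroup of `N` is trivial,
and every amenable normal subgroup of `G/N` is trivial, then every amenable
normal subgroup of `G` is trivial. -/
theorem trivial_amenable_radical_of_extension
    {G : Type*} [Group G] (N : Subgroup G) [N.Normal]
    (hN : ∀ K : Subgroup N, K.Normal → IsAmenableGroup K → K = ⊥)
    (hQ : ∀ K : Subgroup (G ⧸ N), K.Normal → IsAmenableGroup K → K = ⊥) :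
    ∀ K : Subgroup G, K.Normal → IsAmenableGroup K → K = ⊥ := by
  intro K hK hKam
  -- image of K in G/N
  have hmapN : (K.map (QuotientGroup.mk' N)).Normal :=
    Subgroup.Normal.map hK _ (QuotientGroup.mk'_surjective N)
  have hmapAm : IsAmenableGroup (K.map (QuotientGroup.mk' N)) :=
    hKam.of_surjective ((QuotientGroup.mk' N).subgroupMap K)
      ((QuotientGroup.mk' N).subgroupMap_surjective K)
  have hbot := hQ _ hmapN hmapAm
  have hKN : K ≤ N := by
    have := (Subgroup.map_eq_bot_iff K).mp hbot
    rwa [QuotientGroup.ker_mk'] at this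
  -- K as subgroup of N
  have hsubN : (K.subgroupOf N).Normal := hK.subgroupOf N
  have hsubAm : IsAmenableGroup (K.subgroupOf N) :=
    hKam.of_surjective (Subgroup.subgroupOfEquivOfLe hKN).symm.toMonoidHom
      (Subgroup.subgroupOfEquivOfLe hKN).symm.surjective
  have hsubBot := hN _ hsubN hsubAm
  rw [Subgroup.subgroupOf_eq_bot] at hsubBot
  exact le_bot_iff.mp ((le_inf le_rfl hKN).trans hsubBot.le_bot)
end

section
/- Let B be a unital C*-algebra, E : B → A a conditional expectation onto a C*-subalgebra A (E is a positive, A-bimodule, unital projection of norm 1), and let a group G act on B by a twisted action (α', σ) with α'_s = Ad(λ(s)) for unitaries λ(s) ∈ B satisfying λ(s)λ(t) = σ(s,t)λ(st) with σ(s,t) ∈ U(A), E(λ(s)) = 0 for s ≠ 1, and E(λ(s) x λ(s)*) = α_s(E(x)) for all x ∈ B. If τ is a tracial state on A with τ ∘ α_s = τ for all s, then φ = τ ∘ E satisfies φ(u x u*) = φ(x) for every x ∈ B and every unitary u of the form u = a λ(s) with a ∈ U(A). -/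
open ComplexOrder

/-- Let `E : B → A ⊆ B` be a `G`-equivariant conditional
expectation for a twisted action implemented by unitaries `lam s` with cocycle
`σ` valued in `U(A)`, and let `τ` be a `G`-invariant tracial state on `A`.
Then `φ = τ ∘ E` satisfies `φ (u x u*) = φ x` for every unitary of the form
`u = a · lam s` with `a` a unitary of `A`. -/
theorem trace_comp_expectation_ad_invariant
    {G : Type*} [Group G]
    {B : Type*} [NormedRing B] [StarRing B] [CStarRing B] [CompleteSpace B]
    [NormedAlgebra ℂ B] [StarModule ℂ B] [PartialOrder B] [StarOrderedRing B]
    (A : StarSubalgebra ℂ B)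
    (E : B →ₗ[ℂ] B) (τ : B →ₗ[ℂ] ℂ) (lam : G → B) (σ : G → G → B)
    -- E is a conditional expectation onto A
    (hrange : ∀ x : B, E x ∈ A)
    (hproj : ∀ a : B, a ∈ A → E a = a)
    (hbimod : ∀ a : B, a ∈ A → ∀ b : B, b ∈ A → ∀ x : B, E (a * x * b) = a * E x * b)
    (hEpos : ∀ x : B, 0 ≤ x → 0 ≤ E x)
    -- lam is a σ-projective unitary representation with cocycle in U(A)
    (hlamu : ∀ s : G, lam s ∈ unitary B) (hlam1 : lam 1 = 1)
    (hσA : ∀ s t : G, σ s t ∈ A) (hσu : ∀ s t : G, σ s t ∈ unitary B)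
    (hσ : ∀ s t : G, lam s * lam t = σ s t * lam (s * t))
    -- covariance: Ad(lam s) preserves A
    (hcov : ∀ (s : G) (a : B), a ∈ A → lam s * a * star (lam s) ∈ A)
    -- E kills lam s for s ≠ 1 and is G-equivariant
    (hE0 : ∀ s : G, s ≠ 1 → E (lam s) = 0)
    (hequiv : ∀ (s : G) (x : B), E (lam s * x * star (lam s)) = lam s * E x * star (lam s))
    -- τ is a G-invariant tracial state on A
    (hτ1 : τ 1 = 1) (hτpos : ∀ a : B, a ∈ A → 0 ≤ τ (star a * a))
    (hτtr : ∀ a : B, a ∈ A → ∀ b : B, b ∈ A → τ (a * b) = τ (b * a))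
    (hτinv : ∀ (s : G) (a : B), a ∈ A → τ (lam s * a * star (lam s)) = τ a) :
    ∀ a : B, a ∈ A → a ∈ unitary B → ∀ (s : G) (x : B),
      τ (E ((a * lam s) * x * star (a * lam s))) = τ (E x) := by
  intro a haA hau s x
  have hsa : star a ∈ A := star_mem haA
  have key : E ((a * lam s) * x * star (a * lam s))
      = a * (lam s * E x * star (lam s)) * star a := by
    have h1 : (a * lam s) * x * star (a * lam s)
        = a * (lam s * x * star (lam s)) * star a := by
      rw [star_mul]; noncomm_ring
    rw [h1, hbimod a haA (star a) hsa, hequiv]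
  rw [key]
  have hy : lam s * E x * star (lam s) ∈ A := hcov s _ (hrange x)
  have h2 : τ (a * (lam s * E x * star (lam s)) * star a)
      = τ (lam s * E x * star (lam s)) := by
    rw [hτtr _ (A.mul_mem haA hy) (star a) hsa, ← mul_assoc,
      (Unitary.mem_iff.mp hau).1, one_mul]
  rw [h2, hτinv s _ (hrange x)]
end
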